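/- arXiv:math/0209027 — 7 statements merged into one kernel-verified Lean document; each statement's English description precedes it below -/
import Mathlib

section
/- In a free group, the centralizer of any nontrivial element is infinite cyclic. -/
/-!
The centralizer of `g` is free by Nielsen–Schreier, and `g` is a nontrivial element of its
center. A free group of rank at least two has trivial center: a reduced word `w ≠ 1` commuting
with generators `a ≠ b` would be a power of a single letter involving `a` and also of one
involving `b`. So the centralizer is free of rank one, that is, infinite cyclic.
-/

namespace FreeGroup

variable {α : Type*}

theorem commute_mk_singleton {a : α} {z : FreeGroup α} (h : Commute z (of a)) :
    ∀ s : Bool, Commute z (mk [(a, s)])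
  | true => h
  | false => h.inv_right

section Words

variable [DecidableEq α]

theorem toWord_mk_singleton_mul {x : α × Bool} {z : FreeGroup α}
    (h : IsReduced (x :: z.toWord)) : (mk [x] * z).toWord = x :: z.toWord := by
  rw [toWord_mul, toWord_mk, reduce_singleton]
  exact h.reduce_eq

theorem toWord_mul_mk_singleton {x : α × Bool} {z : FreeGroup α}
    (h : IsReduced (z.toWord ++ [x])) : (z * mk [x]).toWord = z.toWord ++ [x] := by
  rw [toWord_mul, toWord_mk, reduce_singleton]
  exact h.reduce_eq

/-- Both products with `x` are computed without cancellation, so commuting with `x` says that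
`x :: z.toWord` is invariant under rotation. -/
theorem eq_of_mem_toWord_of_commute {x : α × Bool} {z : FreeGroup α} (hz : Commute z (mk [x]))
    (h₁ : IsReduced (x :: z.toWord)) (h₂ : IsReduced (z.toWord ++ [x])) {y : α × Bool}
    (hy : y ∈ z.toWord) : y = x := by
  have hrot : (x :: z.toWord).rotate 1 = x :: z.toWord := by
    rw [List.rotate_cons_succ, List.rotate_zero, ← toWord_mul_mk_singleton h₂, hz.eq,
      toWord_mk_singleton_mul h₁]
  have : Nonempty (α × Bool) := ⟨x⟩
  obtain ⟨b, hb⟩ := List.rotate_one_eq_self_iff_eq_replicate.mp hrot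
  have hx : x = b := List.eq_of_mem_replicate (hb ▸ List.mem_cons_self)
  exact hx ▸ List.eq_of_mem_replicate (hb ▸ List.mem_cons_of_mem x hy)

theorem eq_one_of_commute_of_ne {a b : α} (hab : a ≠ b) {z : FreeGroup α}
    (ha : Commute z (of a)) (hb : Commute z (of b)) : z = 1 := by
  by_contra hz
  -- A `d`-letter with the sign of the head of `z.toWord`, where `d` is not the generator of its
  -- last letter, cancels on neither side, so the word consists of `d`-letters. Then `(e, true)`
  -- cancels on neither side either, so the word consists of `e`-letters too.
  have hw : z.toWord ≠ [] := mt toWord_eq_nil_iff.mp hz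
  obtain ⟨d, hd, hd_last⟩ : ∃ d, Commute z (of d) ∧ d ≠ (z.toWord.getLast hw).1 := by
    by_cases h : (z.toWord.getLast hw).1 = a
    · exact ⟨b, hb, h ▸ hab.symm⟩
    · exact ⟨a, ha, Ne.symm h⟩
  obtain ⟨e, he, hed⟩ : ∃ e, Commute z (of e) ∧ e ≠ d := by
    by_cases h : d = a
    · exact ⟨b, hb, h ▸ hab.symm⟩
    · exact ⟨a, ha, Ne.symm h⟩
  have hw_d : ∀ y ∈ z.toWord, y = (d, (z.toWord.head hw).2) := by
    refine fun y => eq_of_mem_toWord_of_commute (commute_mk_singleton hd _) ?_ ?_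
    · refine List.isChain_cons.2 ⟨?_, isReduced_toWord⟩
      rw [List.head?_eq_some_head hw]
      rintro _ ⟨⟩ -
      rfl
    · refine List.isChain_append.2 ⟨isReduced_toWord, IsReduced.singleton, ?_⟩
      rw [List.getLast?_eq_some_getLast hw]
      rintro _ ⟨⟩ _ ⟨⟩ h
      exact absurd h.symm hd_last
  have hw_e : ∀ y ∈ z.toWord, y = (e, true) := by
    have hne : ∀ y ∈ z.toWord, y.1 ≠ e := fun y hy => (hw_d y hy).symm ▸ hed.symm
    refine fun y => eq_of_mem_toWord_of_commute (commute_mk_singleton he _) ?_ ?_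
    · refine List.isChain_cons.2 ⟨fun y hy h => ?_, isReduced_toWord⟩
      exact absurd h.symm (hne y (List.mem_of_mem_head? hy))
    · refine List.isChain_append.2 ⟨isReduced_toWord, IsReduced.singleton, ?_⟩
      rintro y hy _ ⟨⟩ h
      exact absurd h (hne y (List.mem_of_mem_getLast? hy))
  have h_head := List.head_mem hw
  exact hed (congrArg Prod.fst ((hw_e _ h_head).symm.trans (hw_d _ h_head)))

end Words

theorem subsingleton_of_mem_center {z : FreeGroup α} (hz : z ∈ Subgroup.center (FreeGroup α))
    (hz₁ : z ≠ 1) : Subsingleton α := by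
  classical
  refine ⟨fun a b => by_contra fun hab => hz₁ (eq_one_of_commute_of_ne hab ?_ ?_)⟩ <;>
    exact (Subgroup.mem_center_iff.mp hz _).symm

end FreeGroup

theorem IsFreeGroup.nonempty_mulEquiv_int_of_mem_center {H : Type*} [Group H] [IsFreeGroup H]
    {z : H} (hz : z ∈ Subgroup.center H) (hz₁ : z ≠ 1) : Nonempty (H ≃* Multiplicative ℤ) := by
  set e := IsFreeGroup.toFreeGroup H
  have : Subsingleton (IsFreeGroup.Generators H) :=
    FreeGroup.subsingleton_of_mem_center (Subgroup.mem_center_iff.mpr fun y => by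
      simpa using congrArg e (Subgroup.mem_center_iff.mp hz (e.symm y))) (by simpa using hz₁)
  have : Nonempty (IsFreeGroup.Generators H) := by
    by_contra!
    exact hz₁ (e.injective (Subsingleton.elim _ _))
  have := uniqueOfSubsingleton (Classical.arbitrary (IsFreeGroup.Generators H))
  exact ⟨e.trans FreeGroup.mulEquivIntOfUnique⟩

/-- In a free group, the centralizer of any nontrivial element is infinite cyclic. -/
theorem stmt_1 (G : Type*) [Group G] [IsFreeGroup G] (g : G) (hg : g ≠ 1) :
    Nonempty (Subgroup.centralizer ({g} : Set G) ≃* Multiplicative ℤ) := by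
  have hg_mem : g ∈ Subgroup.centralizer ({g} : Set G) :=
    Subgroup.mem_centralizer_singleton_iff.mpr rfl
  refine IsFreeGroup.nonempty_mulEquiv_int_of_mem_center (z := ⟨g, hg_mem⟩) ?_ ?_
  · exact Subgroup.mem_center_iff.mpr fun y => Subtype.ext
      (Subgroup.mem_centralizer_singleton_iff.mp y.2)
  · exact fun h => hg (congrArg Subtype.val h)
end

section
/- Let G be a group, f ∈ G a central element of infinite order, p : G → H a surjective group homomorphism whose kernel is the cyclic subgroup generated by f, and suppose every nontrivial abelian subgroup of H is cyclic. If α, β ∈ G satisfy α β α⁻¹ = β f^k for some integer k, then k = 0. -/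
/-!
Modulo the central subgroup `⟨f⟩`, the relation says that `p α` and `p β` commute. They then
generate a cyclic subgroup of `H`, say with generator `p γ`, so `α` and `β` are powers of `γ` up
to central factors and therefore commute in `G`. Hence `f ^ k = 1`, and `k = 0` since `f` has
infinite order.
-/

section

variable {G H : Type*} [Group G] [Group H]

theorem Commute.of_map_mem_zpowers {p : G →* H} (hker : p.ker ≤ Subgroup.center G)
    {x y γ : G} (hx : p x ∈ Subgroup.zpowers (p γ)) (hy : p y ∈ Subgroup.zpowers (p γ)) :
    Commute x y := by
  have central (z : G) (hz : z ∈ p.ker) (w : G) : Commute z w :=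
    (Subgroup.mem_center_iff.mp (hker hz) w).symm
  obtain ⟨m, hm⟩ := hx
  obtain ⟨n, hn⟩ := hy
  have hz : (γ ^ m)⁻¹ * x ∈ p.ker := by simp [← hm]
  have hw : (γ ^ n)⁻¹ * y ∈ p.ker := by simp [← hn]
  rw [← mul_inv_cancel_left (γ ^ m) x, ← mul_inv_cancel_left (γ ^ n) y]
  refine .mul_left (.mul_right (.zpow_zpow_self γ m n) ?_) ?_
  · exact (central _ hw _).symm
  · exact central _ hz _

theorem exists_zpowers_of_commute
    (hcyc : ∀ A : Subgroup H, A ≠ ⊥ → (∀ a b : A, a * b = b * a) → IsCyclic A)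
    {a b : H} (hab : Commute a b) :
    ∃ c ∈ Subgroup.closure {a, b}, a ∈ Subgroup.zpowers c ∧ b ∈ Subgroup.zpowers c := by
  set A := Subgroup.closure ({a, b} : Set H)
  have : IsMulCommutative A := Subgroup.isMulCommutative_closure (by
    simp only [Set.mem_insert_iff, Set.mem_singleton_iff]
    rintro x (rfl | rfl) y (rfl | rfl) <;> first | rfl | exact hab.eq | exact hab.symm.eq)
  have : IsCyclic A := by
    by_cases hA : A = ⊥
    · rw [hA]; infer_instance
    · exact hcyc A hA fun u v => Std.Commutative.comm u v
  obtain ⟨c, hc⟩ := IsCyclic.exists_generator (α := A)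
  have mem (z : H) (hz : z ∈ A) : z ∈ Subgroup.zpowers (c : H) := by
    obtain ⟨k, hk⟩ := hc ⟨z, hz⟩
    exact ⟨k, by simpa using congrArg Subtype.val hk⟩
  exact ⟨c, c.2, mem a (Subgroup.subset_closure (by simp)),
    mem b (Subgroup.subset_closure (by simp))⟩

end

theorem stmt_2_general (G H : Type*) [Group G] [Group H] (f : G)
    (hf : f ∈ Subgroup.center G) (hinf : ¬ IsOfFinOrder f)
    (p : G →* H)
    (hker : p.ker = Subgroup.zpowers f)
    (hab : ∀ A : Subgroup H, A ≠ ⊥ → (∀ a b : A, a * b = b * a) → IsCyclic A)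
    (α β : G) (k : ℤ) (h : α * β * α⁻¹ = β * f ^ k) : k = 0 := by
  have hf_ker : f ∈ p.ker := hker ▸ Subgroup.mem_zpowers f
  have hker_center : p.ker ≤ Subgroup.center G := hker ▸ (Subgroup.zpowers_le.mpr hf)
  have hcomm_image : Commute (p α) (p β) := by
    have := congrArg p h
    simp only [map_mul, map_inv, map_zpow, MonoidHom.mem_ker.mp hf_ker, one_zpow, mul_one] at this
    exact mul_inv_eq_iff_eq_mul.mp this
  obtain ⟨c, hcA, hα, hβ⟩ := exists_zpowers_of_commute hab hcomm_image
  obtain ⟨γ, rfl⟩ : c ∈ p.range := Subgroup.closure_le _ |>.mpr (by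
    rintro _ (rfl | rfl) <;> exact ⟨_, rfl⟩) hcA
  have hfk : f ^ k = 1 := by
    rw [(Commute.of_map_mem_zpowers hker_center hα hβ).eq, mul_inv_cancel_right] at h
    exact mul_eq_left.mp h.symm
  exact injective_zpow_iff_not_isOfFinOrder.mpr hinf (hfk.trans (zpow_zero f).symm)

theorem stmt_2 (G H : Type*) [Group G] [Group H] (f : G)
    (hf : f ∈ Subgroup.center G) (hinf : ¬ IsOfFinOrder f)
    (p : G →* H) (hsurj : Function.Surjective p)
    (hker : p.ker = Subgroup.zpowers f)
    (hab : ∀ A : Subgroup H, A ≠ ⊥ → (∀ a b : A, a * b = b * a) → IsCyclic A)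
    (α β : G) (k : ℤ) (h : α * β * α⁻¹ = β * f ^ k) : k = 0 :=
  stmt_2_general G H f hf hinf p hker hab α β k h
end

section
/- Under the same hypotheses (f central of infinite order generating ker p, and every nontrivial abelian subgroup of H cyclic), two elements α₁, α₂ ∈ G commute if and only if their images p(α₁), p(α₂) commute in H. -/
theorem stmt_3 (G H : Type*) [Group G] [Group H] (f : G)
    (hf : f ∈ Subgroup.center G) (hinf : ¬ IsOfFinOrder f)
    (p : G →* H) (hsurj : Function.Surjective p)
    (hker : p.ker = Subgroup.zpowers f)
    (hab : ∀ A : Subgroup H, A ≠ ⊥ → (∀ a b : A, a * b = b * a) →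
      Nonempty (A ≃* Multiplicative ℤ))
    (α₁ α₂ : G) :
    α₁ * α₂ = α₂ * α₁ ↔ p α₁ * p α₂ = p α₂ * p α₁ := by
  have hcent : ∀ x : G, Commute x f := fun x => Subgroup.mem_center_iff.mp hf x
  constructor
  · intro h
    have := congrArg p h
    simpa using this
  · intro h
    -- key: if an element maps to a power of some c = p γ, it is f^k * γ^m
    have key : ∀ γ a : G, ∀ m : ℤ, p a = p γ ^ m → ∃ k : ℤ, a = f ^ k * γ ^ m := by
      intro γ a m hm
      have : a * (γ ^ m)⁻¹ ∈ p.ker := by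
        rw [MonoidHom.mem_ker, map_mul, map_inv, map_zpow, hm, mul_inv_cancel]
      rw [hker, Subgroup.mem_zpowers_iff] at this
      obtain ⟨k, hk⟩ := this
      exact ⟨k, by rw [hk]; group⟩
    -- commuting of elements of the form f^k * γ^m
    have comm : ∀ γ : G, ∀ k l m n : ℤ, (f ^ k * γ ^ m) * (f ^ l * γ ^ n)
        = (f ^ l * γ ^ n) * (f ^ k * γ ^ m) := by
      intro γ k l m n
      have h1 : Commute (f ^ k) (f ^ l) := ((hcent f).zpow_zpow k l)
      have h2 : Commute (f ^ k) (γ ^ n) := ((hcent γ).symm.zpow_zpow k n)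
      have h3 : Commute (γ ^ m) (f ^ l) := ((hcent γ).zpow_zpow m l)
      have h4 : Commute (γ ^ m) (γ ^ n) := ((Commute.refl γ).zpow_zpow m n)
      exact ((h1.mul_right h2).mul_left (h3.mul_right h4))
    by_cases h1 : p α₁ = 1
    · -- α₁ is a power of f, hence central
      have : α₁ ∈ p.ker := h1
      rw [hker, Subgroup.mem_zpowers_iff] at this
      obtain ⟨k, hk⟩ := this
      rw [← hk]
      exact ((hcent α₂).symm.zpow_left k).eq
    by_cases h2 : p α₂ = 1
    · have : α₂ ∈ p.ker := h2
      rw [hker, Subgroup.mem_zpowers_iff] at this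
      obtain ⟨k, hk⟩ := this
      rw [← hk]
      exact ((hcent α₁).zpow_right k).eq
    -- the subgroup generated by the images is abelian and nontrivial
    set A : Subgroup H := Subgroup.closure {p α₁, p α₂} with hA
    have hmem1 : p α₁ ∈ A := Subgroup.subset_closure (by left; rfl)
    have hmem2 : p α₂ ∈ A := Subgroup.subset_closure (by right; rfl)
    have hAne : A ≠ ⊥ := by
      intro hbot
      exact h1 (by simpa [hbot, Subgroup.mem_bot] using hmem1)
    have hcommA : ∀ a b : A, a * b = b * a := by
      have hgen : ∀ x ∈ ({p α₁, p α₂} : Set H), ∀ y ∈ ({p α₁, p α₂} : Set H),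
          Commute x y := by
        rintro x (rfl | rfl) y (rfl | rfl)
        · exact Commute.refl _
        · exact h
        · exact h.symm
        · exact Commute.refl _
      rintro ⟨a, ha⟩ ⟨b, hb⟩
      have : Commute a b := by
        induction ha, hb using Subgroup.closure_induction₂ with
        | mem x y hx hy => exact hgen x hx y hy
        | one_left y hy => exact Commute.one_left y
        | one_right x hx => exact Commute.one_right x
        | mul_left x y z hx hy hz hxz hyz => exact hxz.mul_left hyz
        | mul_right x y z hx hy hz hxy hxz => exact hxy.mul_right hxz
        | inv_left x y hx hy hxy => exact hxy.inv_left
        | inv_right x y hx hy hxy => exact hxy.inv_right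
      exact Subtype.ext this
    obtain ⟨e⟩ := hab A hAne hcommA
    -- generator
    obtain ⟨γ, hγ⟩ := hsurj (e.symm (Multiplicative.ofAdd 1) : A)
    have hgen : ∀ a : A, (a : H) = p γ ^ (Multiplicative.toAdd (e a)) := by
      intro a
      have : a = e.symm (Multiplicative.ofAdd 1) ^ (Multiplicative.toAdd (e a)) := by
        apply e.injective
        rw [map_zpow, MulEquiv.apply_symm_apply]
        rw [← ofAdd_zsmul]
        simp
      calc (a : H) = ((e.symm (Multiplicative.ofAdd 1) ^ (Multiplicative.toAdd (e a)) : A) : H) := by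
            rw [← this]
        _ = p γ ^ (Multiplicative.toAdd (e a)) := by
            push_cast [hγ]
            rfl
    obtain ⟨k, hk⟩ := key γ α₁ _ (hgen ⟨p α₁, hmem1⟩)
    obtain ⟨l, hl⟩ := key γ α₂ _ (hgen ⟨p α₂, hmem2⟩)
    rw [hk, hl]
    apply comm
end

section
/- Let G be a group, f ∈ G central of infinite order, and p : G → H a surjective homomorphism with kernel ⟨f⟩. If every nontrivial abelian subgroup of H is cyclic and p(α₁) is conjugate to p(α₂) in H, then there exists a unique integer i such that α₁ is conjugate to α₂ f^i in G. -/
theorem stmt_4 (G H : Type*) [Group G] [Group H] (f : G)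
    (hf : f ∈ Subgroup.center G) (hinf : ¬ IsOfFinOrder f)
    (p : G →* H) (hsurj : Function.Surjective p)
    (hker : p.ker = Subgroup.zpowers f)
    (hab : ∀ A : Subgroup H, A ≠ ⊥ → (∀ a b : A, a * b = b * a) →
      Nonempty (A ≃* Multiplicative ℤ))
    (α₁ α₂ : G) (hconj : IsConj (p α₁) (p α₂)) :
    ∃! i : ℤ, IsConj α₁ (α₂ * f ^ i) := by
  have hinj : Function.Injective fun n : ℤ => f ^ n :=
    injective_zpow_iff_not_isOfFinOrder.mpr hinf
  have hcf : ∀ x : G, Commute x f := fun x => Subgroup.mem_center_iff.mp hf x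
  -- Uniqueness key lemma
  have key : ∀ i j : ℤ, IsConj α₁ (α₂ * f ^ i) → IsConj α₁ (α₂ * f ^ j) → i = j := by
    intro i j h1 h2
    obtain ⟨g, hg⟩ := isConj_iff.mp (h1.symm.trans h2)
    -- hg : g * (α₂ * f ^ i) * g⁻¹ = α₂ * f ^ j
    -- It suffices to show g and α₂ commute
    suffices hgα : Commute g α₂ by
      have heq : α₂ * f ^ i = α₂ * f ^ j := by
        rw [← hg, (hgα.mul_right ((hcf g).zpow_right i)).eq, mul_inv_cancel_right]
      exact hinj (mul_left_cancel heq)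
    -- p g commutes with p α₂
    have hpf : p f = 1 := by
      rw [← MonoidHom.mem_ker, hker]; exact Subgroup.mem_zpowers f
    have hpc : p g * p α₂ = p α₂ * p g := by
      have := congrArg p hg
      simp only [map_mul, map_inv, map_zpow, hpf, one_zpow, mul_one] at this
      exact mul_inv_eq_iff_eq_mul.mp this
    -- A tool: from p x = c, a lift t with p t = c gives x = f ^ r * t for some r
    have hlift : ∀ (x t : G), p x = p t → ∃ r : ℤ, x = f ^ r * t := by
      intro x t hxt
      have hmem : x * t⁻¹ ∈ p.ker := by
        rw [MonoidHom.mem_ker, map_mul, map_inv, hxt, mul_inv_cancel]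
      rw [hker] at hmem
      obtain ⟨r, hr⟩ := hmem
      exact ⟨r, by rw [show f ^ r = x * t⁻¹ from hr, inv_mul_cancel_right]⟩
    by_cases htriv : p α₂ = 1 ∧ p g = 1
    · obtain ⟨r, hr⟩ := hlift α₂ 1 (by simp [htriv.1])
      obtain ⟨s, hs⟩ := hlift g 1 (by simp [htriv.2])
      rw [hr, hs, mul_one, mul_one]
      exact ((Commute.refl f).zpow_zpow s r)
    · set A := Subgroup.closure {p α₂, p g} with hA
      have hmem₁ : p α₂ ∈ A := Subgroup.subset_closure (Set.mem_insert _ _)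
      have hmem₂ : p g ∈ A := Subgroup.subset_closure (Set.mem_insert_of_mem _ rfl)
      have hAne : A ≠ ⊥ := by
        intro hbot
        rw [hbot, Subgroup.mem_bot] at hmem₁ hmem₂
        exact htriv ⟨hmem₁, hmem₂⟩
      have habel : ∀ a b : A, a * b = b * a := by
        rintro ⟨a, ha⟩ ⟨b, hb⟩
        ext
        show a * b = b * a
        induction ha, hb using Subgroup.closure_induction₂ with
        | mem x y hx hy =>
          rcases hx with rfl | hx <;> rcases hy with rfl | hy
          · rfl
          · rw [Set.mem_singleton_iff] at hy; rw [hy]; exact hpc.symm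
          · rw [Set.mem_singleton_iff] at hx; rw [hx]; exact hpc
          · rw [Set.mem_singleton_iff] at hx hy; rw [hx, hy]
        | one_left x hx => simp
        | one_right x hx => simp
        | mul_left x y z hx hy hz h₁ h₂ => exact (Commute.mul_left h₁ h₂ : _)
        | mul_right y z x hy hz hx h₁ h₂ => exact (Commute.mul_right h₁ h₂ : _)
        | inv_left x y hx hy h => exact (Commute.inv_left h : _)
        | inv_right x y hx hy h => exact (Commute.inv_right h : _)
      obtain ⟨ψ⟩ := hab A hAne habel
      set a0 : A := ψ.symm (Multiplicative.ofAdd 1) with ha0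
      have hxpow : ∀ x : A, x = a0 ^ (Multiplicative.toAdd (ψ x)) := by
        intro x
        apply ψ.injective
        rw [map_zpow, ha0, MulEquiv.apply_symm_apply]
        rw [← ofAdd_zsmul, smul_eq_mul, mul_one, ofAdd_toAdd]
      obtain ⟨t, ht⟩ := hsurj (a0 : H)
      set m : ℤ := Multiplicative.toAdd (ψ ⟨p α₂, hmem₁⟩) with hm
      set n : ℤ := Multiplicative.toAdd (ψ ⟨p g, hmem₂⟩) with hn
      have hα₂ : p α₂ = p (t ^ m) := by
        have := congrArg (Subtype.val) (hxpow ⟨p α₂, hmem₁⟩)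
        rw [map_zpow, ht]
        simpa using this
      have hg' : p g = p (t ^ n) := by
        have := congrArg (Subtype.val) (hxpow ⟨p g, hmem₂⟩)
        rw [map_zpow, ht]
        simpa using this
      obtain ⟨r, hr⟩ := hlift α₂ (t ^ m) hα₂
      obtain ⟨s, hs⟩ := hlift g (t ^ n) hg'
      rw [hr, hs]
      exact (((Commute.refl f).zpow_zpow s r).mul_right ((hcf t).symm.zpow_zpow s m)).mul_left
        (((hcf t).zpow_zpow n r).mul_right ((Commute.refl t).zpow_zpow n m))
  -- Existence
  obtain ⟨c, hc⟩ := isConj_iff.mp hconj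
  obtain ⟨g, rfl⟩ := hsurj c
  have hmem : g * α₁ * g⁻¹ * α₂⁻¹ ∈ p.ker := by
    rw [MonoidHom.mem_ker]
    simp only [map_mul, map_inv]
    rw [hc, mul_inv_cancel]
  rw [hker] at hmem
  obtain ⟨k, hk⟩ := hmem
  have hPk : IsConj α₁ (α₂ * f ^ k) := by
    refine isConj_iff.mpr ⟨g, ?_⟩
    have : g * α₁ * g⁻¹ = f ^ k * α₂ := by
      rw [show f ^ k = g * α₁ * g⁻¹ * α₂⁻¹ from hk, inv_mul_cancel_right]
    rw [this, ((hcf α₂).zpow_right k).eq]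
  exact ⟨k, hPk, fun j hj => key j k hj hPk⟩
end

section
/- In a free group H, if there is an element ξ with ξ x ξ⁻¹ = y and ξ y ξ⁻¹ = x for x, y ∈ H, then x = y. -/
/-!
Free groups have unique roots (`x ^ n = y ^ n` with `n ≠ 0` forces `x = y`; this, not mere absence
of torsion, is what Mathlib's `IsMulTorsionFree` asserts), and that is all the argument needs. Since `ξ² y ξ⁻² = ξ x ξ⁻¹ = y`, the element `y` commutes with `ξ²`, so
`(y ξ y⁻¹)² = y ξ² y⁻¹ = ξ²`; uniqueness of square roots gives `y ξ y⁻¹ = ξ`, and then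
`x = ξ y ξ⁻¹ = y`.
-/

instance IsFreeGroup.isMulTorsionFree (G : Type*) [Group G] [IsFreeGroup G] :
    IsMulTorsionFree G :=
  Function.Injective.isMulTorsionFree (IsFreeGroup.toFreeGroup G).toMonoidHom
    (IsFreeGroup.toFreeGroup G).injective

theorem Commute.of_pow_right {G : Type*} [Group G] [IsMulTorsionFree G] {a b : G} {n : ℕ}
    (hn : n ≠ 0) (h : Commute a (b ^ n)) : Commute a b := by
  have hconj : (a * b * a⁻¹) ^ n = b ^ n := by
    rw [conj_pow, h.eq, mul_inv_cancel_right]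
  have hab : a * b * a⁻¹ = b := pow_left_injective hn hconj
  rwa [mul_inv_eq_iff_eq_mul] at hab

theorem eq_of_conj_swap {G : Type*} [Group G] [IsMulTorsionFree G] {x y ξ : G}
    (h1 : ξ * x * ξ⁻¹ = y) (h2 : ξ * y * ξ⁻¹ = x) : x = y := by
  have hsq : Commute y (ξ ^ 2) := by
    rw [commute_iff_eq, ← eq_mul_inv_iff_mul_eq]
    calc y = ξ * (ξ * y * ξ⁻¹) * ξ⁻¹ := by rw [h2, h1]
      _ = ξ ^ 2 * y * (ξ ^ 2)⁻¹ := by rw [sq, mul_inv_rev]; group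
  have hcomm : Commute y ξ := hsq.of_pow_right two_ne_zero
  rw [← h2, ← hcomm.eq, mul_inv_cancel_right]

/-- In a free group, if ξ swaps x and y by conjugation, then x = y. -/
theorem stmt_5 (H : Type*) [Group H] [IsFreeGroup H] (x y ξ : H)
    (h1 : ξ * x * ξ⁻¹ = y) (h2 : ξ * y * ξ⁻¹ = x) : x = y :=
  eq_of_conj_swap h1 h2
end

section
/- Let T be a ℤ-linear endomorphism of the module of finitely supported functions ℕ → ℤ given by (T v)(n) = −4v(n) + 2v(n+1) + 2v(n−1) (with the convention v(−1) = 0). Then T is injective. -/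
theorem stmt_9 (T : (ℕ →₀ ℤ) →ₗ[ℤ] (ℕ →₀ ℤ))
    (hT0 : ∀ v : ℕ →₀ ℤ, T v 0 = -4 * v 0 + 2 * v 1)
    (hT : ∀ (v : ℕ →₀ ℤ) (n : ℕ),
      T v (n + 1) = 2 * v n - 4 * v (n + 1) + 2 * v (n + 2)) :
    Function.Injective T := by
  rw [injective_iff_map_eq_zero]
  intro v hv
  have h0 : -4 * v 0 + 2 * v 1 = 0 := by
    have := hT0 v; rw [hv] at this; simpa using this.symm
  have hrec : ∀ n : ℕ, 2 * v n - 4 * v (n + 1) + 2 * v (n + 2) = 0 := by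
    intro n
    have := hT v n; rw [hv] at this; simpa using this.symm
  have key : ∀ n : ℕ, v n = (n + 1 : ℤ) * v 0 ∧ v (n + 1) = (n + 2 : ℤ) * v 0 := by
    intro n
    induction n with
    | zero =>
      refine ⟨by ring, ?_⟩
      push_cast
      linarith
    | succ k ih =>
      obtain ⟨h1, h2⟩ := ih
      refine ⟨h2, ?_⟩
      have := hrec k
      push_cast
      linarith
  have hv0 : v 0 = 0 := by
    obtain ⟨N, hN⟩ : ∃ N : ℕ, v N = 0 := by
      by_cases h : v.support.Nonempty
      · obtain ⟨M, hM⟩ := v.support.exists_max_image id h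
        refine ⟨M + 1, ?_⟩
        by_contra hne
        have : M + 1 ∈ v.support := Finsupp.mem_support_iff.2 hne
        have := hM.2 _ this
        simp only [id] at this
        omega
      · exact ⟨0, by simpa [Finsupp.notMem_support_iff] using
          fun h' => h ⟨0, Finsupp.mem_support_iff.2 h'⟩⟩
    have := (key N).1
    rw [hN] at this
    have hpos : (N : ℤ) + 1 > 0 := by positivity
    nlinarith [this]
  ext n
  have := (key n).1
  simp [this, hv0]
end

section
/- Let G be a group with a central element f of infinite order and p : G → H the quotient by ⟨f⟩, where every nontrivial abelian subgroup of H is cyclic. Then ℤ acts freely and transitively on the set of conjugacy classes of G contained in the preimage of a fixed conjugacy class of H, where i ∈ ℤ sends the conjugacy class of α to the conjugacy class of α f^i. -/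
theorem stmt_11 (G H : Type*) [Group G] [Group H] (f : G)
    (hf : f ∈ Subgroup.center G) (hinf : ¬ IsOfFinOrder f)
    (p : G →* H) (hsurj : Function.Surjective p)
    (hker : p.ker = Subgroup.zpowers f)
    (hab : ∀ A : Subgroup H, A ≠ ⊥ → (∀ a b : A, a * b = b * a) →
      Nonempty (A ≃* Multiplicative ℤ)) :
    -- the action is well defined on conjugacy classes
    (∀ (α α' : G) (i : ℤ), IsConj α α' → IsConj (α * f ^ i) (α' * f ^ i)) ∧
    -- transitive on the classes in the preimage of a fixed class of H
    (∀ α β : G, IsConj (p α) (p β) → ∃ i : ℤ, IsConj (α * f ^ i) β) ∧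
    -- free
    (∀ (α : G) (i : ℤ), IsConj (α * f ^ i) α → i = 0) := by
  have hfc : ∀ (g : G) (i : ℤ), g * f ^ i = f ^ i * g := fun g i =>
    (Subgroup.mem_center_iff.mp (Subgroup.zpow_mem (Subgroup.center G) hf i) g)
  refine ⟨?_, ?_, ?_⟩
  · intro α α' i h
    obtain ⟨c, hc⟩ := isConj_iff.mp h
    refine isConj_iff.mpr ⟨c, ?_⟩
    calc c * (α * f ^ i) * c⁻¹ = c * α * (f ^ i * c⁻¹) := by group
      _ = c * α * (c⁻¹ * f ^ i) := by rw [← hfc]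
      _ = (c * α * c⁻¹) * f ^ i := by group
      _ = α' * f ^ i := by rw [hc]
  · intro α β h
    obtain ⟨h₀, hh⟩ := isConj_iff.mp h
    obtain ⟨g, rfl⟩ := hsurj h₀
    have hm : β⁻¹ * (g * α * g⁻¹) ∈ p.ker := by
      rw [MonoidHom.mem_ker, map_mul, map_mul, map_mul, map_inv, map_inv, hh,
        inv_mul_cancel]
    rw [hker, Subgroup.mem_zpowers_iff] at hm
    obtain ⟨j, hj⟩ := hm
    refine ⟨-j, isConj_iff.mpr ⟨g, ?_⟩⟩
    have hg : g * α * g⁻¹ = β * f ^ j := by rw [hj]; group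
    calc g * (α * f ^ (-j)) * g⁻¹ = g * α * (f ^ (-j) * g⁻¹) := by group
      _ = g * α * (g⁻¹ * f ^ (-j)) := by rw [← hfc]
      _ = (g * α * g⁻¹) * f ^ (-j) := by group
      _ = β * f ^ j * f ^ (-j) := by rw [hg]
      _ = β := by group
  · intro α i h
    obtain ⟨c, hc⟩ := isConj_iff.mp h
    -- p c commutes with p α
    have hcomH : Commute (p α) (p c) := by
      have h1 : p (c * (α * f ^ i) * c⁻¹) = p α := by rw [hc]
      have hfi : p (f ^ i) = 1 := by
        have : f ^ i ∈ p.ker := by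
          rw [hker]; exact Subgroup.zpow_mem _ (Subgroup.mem_zpowers f) i
        rwa [MonoidHom.mem_ker] at this
      simp only [map_mul, map_inv, hfi, mul_one] at h1
      exact (mul_inv_eq_iff_eq_mul.mp h1).symm
    set x := p α with hx
    set y := p c with hy
    set A := Subgroup.closure ({x, y} : Set H) with hA
    have hxA : x ∈ A := Subgroup.subset_closure (by simp)
    have hyA : y ∈ A := Subgroup.subset_closure (by simp)
    have hcommA : ∀ s ∈ ({x, y} : Set H), ∀ a ∈ A, Commute s a := by
      intro s hs a ha
      induction ha using Subgroup.closure_induction with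
      | mem z hz =>
        rcases hs with rfl | rfl <;> rcases hz with rfl | rfl
        · exact Commute.refl _
        · exact hcomH
        · exact hcomH.symm
        · exact Commute.refl _
      | one => exact Commute.one_right _
      | mul z w _ _ h1 h2 => exact h1.mul_right h2
      | inv z _ h1 => exact h1.inv_right
    have hAab : ∀ a b : A, a * b = b * a := by
      rintro ⟨a, ha⟩ ⟨b, hb⟩
      ext
      show a * b = b * a
      induction ha using Subgroup.closure_induction with
      | mem z hz => exact hcommA z hz b hb
      | one => exact (Commute.one_left _)
      | mul z w _ _ h1 h2 => exact (Commute.mul_left h1 h2)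
      | inv z _ h1 => exact (Commute.inv_left h1)
    -- key : c and α commute in G
    have hcent : ∀ (g : G) (k : ℤ), Commute (f ^ k) g := fun g k => (hfc g k).symm
    have hkey : Commute c α := by
      by_cases hbot : A = ⊥
      · have hx1 : x = 1 := by rw [hbot] at hxA; exact Subgroup.mem_bot.mp hxA
        have hy1 : y = 1 := by rw [hbot] at hyA; exact Subgroup.mem_bot.mp hyA
        have hαk : α ∈ p.ker := by rw [MonoidHom.mem_ker]; exact hx1
        have hck : c ∈ p.ker := by rw [MonoidHom.mem_ker]; exact hy1
        rw [hker, Subgroup.mem_zpowers_iff] at hαk hck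
        obtain ⟨m, hm⟩ := hαk
        obtain ⟨n, hn⟩ := hck
        rw [← hm, ← hn]
        exact hcent _ n
      · obtain ⟨e⟩ := hab A hbot hAab
        set t : A := e.symm (Multiplicative.ofAdd 1) with ht
        have hpow : ∀ a : A, a = t ^ (Multiplicative.toAdd (e a)) := by
          intro a
          apply e.injective
          rw [map_zpow, ht, MulEquiv.apply_symm_apply, ← ofAdd_zsmul]
          simp
        obtain ⟨τ, hτ⟩ := hsurj (t : H)
        have lift : ∀ (g : G) (hg : p g ∈ A) (k : ℤ),
            (⟨p g, hg⟩ : A) = t ^ k → ∃ m : ℤ, g = f ^ m * τ ^ k := by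
          intro g hg k hk
          have hpg : p g = (p τ) ^ k := by
            rw [hτ]
            have h2 : ((t ^ k : A) : H) = (t : H) ^ k := by push_cast; ring_nf
            rw [← h2, ← hk]
          have h3 : g * (τ ^ k)⁻¹ ∈ p.ker := by
            rw [MonoidHom.mem_ker, map_mul, map_inv, map_zpow, hpg, mul_inv_cancel]
          rw [hker, Subgroup.mem_zpowers_iff] at h3
          obtain ⟨m, hm⟩ := h3
          exact ⟨m, by rw [hm]; group⟩
        obtain ⟨m, hα⟩ := lift α hxA _ (hpow ⟨x, hxA⟩)
        obtain ⟨n, hc'⟩ := lift c hyA _ (hpow ⟨y, hyA⟩)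
        rw [hα, hc']
        exact Commute.mul_left
          (hcent _ n)
          (((hcent (τ ^ _) m).symm).mul_right ((Commute.refl τ).zpow_zpow _ _))
    have hca : c * α * c⁻¹ = α := by rw [hkey.eq]; group
    have h2 : c * (α * f ^ i) * c⁻¹ = α * f ^ i := by
      calc c * (α * f ^ i) * c⁻¹ = c * α * (f ^ i * c⁻¹) := by group
        _ = c * α * (c⁻¹ * f ^ i) := by rw [← hfc]
        _ = (c * α * c⁻¹) * f ^ i := by group
        _ = α * f ^ i := by rw [hca]
    rw [h2] at hc
    have hfi : f ^ i = 1 := mul_left_cancel (a := α) (by rw [hc, mul_one])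
    have hinj := injective_zpow_iff_not_isOfFinOrder.mpr hinf
    have : f ^ i = f ^ (0 : ℤ) := by rw [hfi, zpow_zero]
    exact hinj this
end
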